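/- For all b, c > 0 one has A2(b, c) ≥ F((b + c)/2), where F(t) = A2(t, t) is given by F(t) = (9 + 96t + 396t^2 + 840t^3 + 954t^4 + 528t^5 + 96t^6)/(1 + 12t + 54t^2 + 120t^3 + 138t^4 + 72t^5 + 12t^6). -/
import Mathlib


/-- Numerator polynomial of LeBrun's functional `A` on `CP² # 2 CP²-bar`. -/
noncomputable def N2 (b c : ℝ) : ℝ :=
  3 + 28*c + 96*c^2 + 168*c^3 + 164*c^4 + 80*c^5 + 16*c^6
  + 16*b^6*(1+c)^4
  + 16*b^5*(5 + 24*c + 43*c^2 + 37*c^3 + 15*c^4 + 2*c^5)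
  + 4*b^4*(41 + 228*c + 478*c^2 + 496*c^3 + 263*c^4 + 60*c^5 + 4*c^6)
  + 8*b^3*(21 + 135*c + 326*c^2 + 392*c^3 + 248*c^4 + 74*c^5 + 8*c^6)
  + 4*b*(7 + 58*c + 176*c^2 + 270*c^3 + 228*c^4 + 96*c^5 + 16*c^6)
  + 4*b^2*(24 + 176*c + 479*c^2 + 652*c^3 + 478*c^4 + 172*c^5 + 24*c^6)

/-- Denominator polynomial of LeBrun's functional `A` on `CP² # 2 CP²-bar`. -/
noncomputable def D2 (b c : ℝ) : ℝ :=
  1 + 10*c + 36*c^2 + 64*c^3 + 60*c^4 + 24*c^5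
  + 24*b^5*(1+c)^5
  + 12*b^4*(1+c)^2*(5 + 20*c + 23*c^2 + 10*c^3)
  + 16*b^3*(4 + 28*c + 72*c^2 + 90*c^3 + 57*c^4 + 15*c^5)
  + 12*b^2*(3 + 24*c + 69*c^2 + 96*c^3 + 68*c^4 + 20*c^5)
  + 2*b*(5 + 45*c + 144*c^2 + 224*c^3 + 180*c^4 + 60*c^5)

/-- LeBrun's normalized Calabi-energy functional on the reduced Kähler cone
of `CP² # 2 CP²-bar`. -/
noncomputable def A2 (b c : ℝ) : ℝ := 3 * N2 b c / D2 b c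
/-- The restriction of `A2` to the diagonal. -/
noncomputable def F (b : ℝ) : ℝ :=
  (9 + 96*b + 396*b^2 + 840*b^3 + 954*b^4 + 528*b^5 + 96*b^6) /
  (1 + 12*b + 54*b^2 + 120*b^3 + 138*b^4 + 72*b^5 + 12*b^6)

set_option maxHeartbeats 2000000 in
/-- For all `b, c > 0` one has `A2 b c ≥ F ((b+c)/2)`, where `F t = A2 t t`. -/
theorem A2_ge_F_midpoint (b c : ℝ) (hb : 0 < b) (hc : 0 < c) :
    F ((b + c) / 2) ≤ A2 b c := by

  have hb' := hb.le
  have hc' := hc.le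
  have hD : (0:ℝ) < D2 b c := by unfold D2; positivity
  set x : ℝ := (b + c) / 2 with hx
  have hx0 : (0:ℝ) < x := by positivity
  have hd1 : (0:ℝ) < 1 + 12*x + 54*x^2 + 120*x^3 + 138*x^4 + 72*x^5 + 12*x^6 := by positivity
  have hQ : (0:ℝ) ≤ 672 + 6528*c + 29184*c^2 + 79104*c^3 + 143340*c^4 + 180336*c^5 + 158208*c^6 + 94368*c^7 + 35856*c^8 + 7488*c^9 + 576*c^10 + 6528*b + 61824*b*c + 267648*b*c^2 + 694992*b*c^3 + 1191408*b*c^4 + 1396896*b*c^5 + 1120512*b*c^6 + 596640*b*c^7 + 196416*b*c^8 + 34560*b*c^9 + 2304*b*c^10 + 29184*b^2 + 267648*b^2*c + 1107912*b^2*c^2 + 2711712*b^2*c^3 + 4312128*b^2*c^4 + 4603776*b^2*c^5 + 3289488*b^2*c^6 + 1520064*b^2*c^7 + 422496*b^2*c^8 + 61632*b^2*c^9 + 3456*b^2*c^10 + 79104*b^3 + 694992*b^3*c + 2711712*b^3*c^2 + 6149184*b^3*c^3 + 8894688*b^3*c^4 + 8458464*b^3*c^5 + 5251392*b^3*c^6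 + 2048256*b^3*c^7 + 465408*b^3*c^8 + 53568*b^3*c^9 + 2304*b^3*c^10 + 143340*b^4 + 1191408*b^4*c + 4312128*b^4*c^2 + 8894688*b^4*c^3 + 11462976*b^4*c^4 + 9479808*b^4*c^5 + 4967136*b^4*c^6 + 1573632*b^4*c^7 + 275184*b^4*c^8 + 22464*b^4*c^9 + 576*b^4*c^10 + 180336*b^5 + 1396896*b^5*c + 4603776*b^5*c^2 + 8458464*b^5*c^3 + 9479808*b^5*c^4 + 6614784*b^5*c^5 + 2804544*b^5*c^6 + 673920*b^5*c^7 + 80064*b^5*c^8 + 3456*b^5*c^9 + 158208*b^6 + 1120512*b^6*c + 3289488*b^6*c^2 + 5251392*b^6*c^3 + 4967136*b^6*c^4 + 2804544*b^6*c^5 + 897696*b^6*c^6 + 144000*b^6*c^7 + 8640*b^6*c^8 + 94368*b^7 + 596640*b^7*c + 1520064*b^7*c^2 + 2048256*b^7*c^3 + 1573632*b^7*c^4 + 673920*b^7*c^5 + 144000*b^7*c^6 + 11520*b^7*c^7 + 35856*b^8 + 196416*b^8*c + 422496*b^8*c^2 + 465408*b^8*c^3 + 275184*b^8*c^4 + 80064*b^8*c^5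 + 8640*b^8*c^6 + 7488*b^9 + 34560*b^9*c + 61632*b^9*c^2 + 53568*b^9*c^3 + 22464*b^9*c^4 + 3456*b^9*c^5 + 576*b^10 + 2304*b^10*c + 3456*b^10*c^2 + 2304*b^10*c^3 + 576*b^10*c^4 := by positivity
  unfold F A2
  rw [div_le_div_iff₀ hd1 hD]
  have key : 64 * (3 * N2 b c * (1 + 12*x + 54*x^2 + 120*x^3 + 138*x^4 + 72*x^5 + 12*x^6)
      - (9 + 96*x + 396*x^2 + 840*x^3 + 954*x^4 + 528*x^5 + 96*x^6) * D2 b c)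
      = (b - c)^2 * (672 + 6528*c + 29184*c^2 + 79104*c^3 + 143340*c^4 + 180336*c^5 + 158208*c^6 + 94368*c^7 + 35856*c^8 + 7488*c^9 + 576*c^10 + 6528*b + 61824*b*c + 267648*b*c^2 + 694992*b*c^3 + 1191408*b*c^4 + 1396896*b*c^5 + 1120512*b*c^6 + 596640*b*c^7 + 196416*b*c^8 + 34560*b*c^9 + 2304*b*c^10 + 29184*b^2 + 267648*b^2*c + 1107912*b^2*c^2 + 2711712*b^2*c^3 + 4312128*b^2*c^4 + 4603776*b^2*c^5 + 3289488*b^2*c^6 + 1520064*b^2*c^7 + 422496*b^2*c^8 + 61632*b^2*c^9 + 3456*b^2*c^10 + 79104*b^3 + 694992*b^3*c + 2711712*b^3*c^2 + 6149184*b^3*c^3 + 8894688*b^3*c^4 + 8458464*b^3*c^5 + 5251392*b^3*c^6 + 2048256*b^3*c^7 + 465408*b^3*c^8 + 53568*b^3*c^9 + 2304*b^3*c^10 + 143340*b^4 + 1191408*b^4*c + 4312128*b^4*c^2 + 8894688*b^4*c^3 + 11462976*b^4*c^4 + 9479808*b^4*c^5 + 4967136*b^4*c^6 + 1573632*b^4*c^7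 + 275184*b^4*c^8 + 22464*b^4*c^9 + 576*b^4*c^10 + 180336*b^5 + 1396896*b^5*c + 4603776*b^5*c^2 + 8458464*b^5*c^3 + 9479808*b^5*c^4 + 6614784*b^5*c^5 + 2804544*b^5*c^6 + 673920*b^5*c^7 + 80064*b^5*c^8 + 3456*b^5*c^9 + 158208*b^6 + 1120512*b^6*c + 3289488*b^6*c^2 + 5251392*b^6*c^3 + 4967136*b^6*c^4 + 2804544*b^6*c^5 + 897696*b^6*c^6 + 144000*b^6*c^7 + 8640*b^6*c^8 + 94368*b^7 + 596640*b^7*c + 1520064*b^7*c^2 + 2048256*b^7*c^3 + 1573632*b^7*c^4 + 673920*b^7*c^5 + 144000*b^7*c^6 + 11520*b^7*c^7 + 35856*b^8 + 196416*b^8*c + 422496*b^8*c^2 + 465408*b^8*c^3 + 275184*b^8*c^4 + 80064*b^8*c^5 + 8640*b^8*c^6 + 7488*b^9 + 34560*b^9*c + 61632*b^9*c^2 + 53568*b^9*c^3 + 22464*b^9*c^4 + 3456*b^9*c^5 + 576*b^10 + 2304*b^10*c + 3456*b^10*c^2 + 2304*b^10*c^3 + 576*b^10*c^4) := by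
    unfold N2 D2; rw [hx]; ring
  linarith [mul_nonneg (sq_nonneg (b - c)) hQ]
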